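/- arXiv:1812.05878 — 3 statements merged into one kernel-verified Lean document; each statement's English description precedes it below -/
import Mathlib

section
/- Lagrange inversion formula for tree-like equations: let r ∈ ℚ⟦X⟧ have nonzero constant coefficient, and let g ∈ ℚ⟦X⟧ have zero constant coefficient and satisfy g = X · (r∘g). Then for every n ≥ 1, n · [Xⁿ]g = [X^{n−1}](rⁿ), i.e. the n-th coefficient of g equals (1/n) times the coefficient of X^{n−1} in the n-th power of r. -/
open PowerSeries

/-- Formal composition (substitution) `f ∘ g = ∑ₖ fₖ gᵏ`, intended for `g` with zero
constant coefficient. -/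
noncomputable def comp (f g : PowerSeries ℚ) : PowerSeries ℚ :=
  PowerSeries.mk fun n =>
    ∑ k ∈ Finset.range (n + 1), PowerSeries.coeff k f * PowerSeries.coeff n (g ^ k)

open Finset

lemma coeff_comp (f g : PowerSeries ℚ) (n : ℕ) :
    coeff n (comp f g) = ∑ k ∈ range (n + 1), coeff k f * coeff n (g ^ k) := by
  simp [comp]

lemma coeff_pow_zero {g : PowerSeries ℚ} (hg0 : constantCoeff g = 0)
    {p j : ℕ} (h : p < j) : coeff p (g ^ j) = 0 :=
  (X_pow_dvd_iff.mp (pow_dvd_pow_of_dvd (X_dvd_iff.mpr hg0) j)) p h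

lemma mul_comp_expand (r g : PowerSeries ℚ) (hg0 : constantCoeff g = 0) (m N : ℕ) :
    coeff N (comp r g * g ^ m) =
      ∑ j ∈ range (N + 1), coeff j r * coeff N (g ^ (j + m)) := by
  rw [coeff_mul]
  have key : ∀ pq ∈ antidiagonal N,
      coeff pq.1 (comp r g) * coeff pq.2 (g ^ m)
        = ∑ j ∈ range (N + 1),
            coeff j r * (coeff pq.1 (g ^ j) * coeff pq.2 (g ^ m)) := by
    intro pq hpq
    have hp : pq.1 ≤ N := HasAntidiagonal.antidiagonal.fst_le hpq
    rw [coeff_comp, Finset.sum_mul]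
    rw [Finset.sum_subset (Finset.range_subset_range.mpr (by omega) : range (pq.1+1) ⊆ range (N+1))]
    · exact Finset.sum_congr rfl fun j _ => by ring
    · intro j hj hj2
      simp only [mem_range, not_lt] at hj2
      rw [coeff_pow_zero hg0 (by omega), mul_zero, zero_mul]
  rw [Finset.sum_congr rfl key, Finset.sum_comm]
  refine Finset.sum_congr rfl fun j _ => ?_
  rw [← Finset.mul_sum, pow_add, coeff_mul]

lemma constCoeff_comp (r g : PowerSeries ℚ) :
    constantCoeff (comp r g) = constantCoeff r := by
  rw [← coeff_zero_eq_constantCoeff_apply, coeff_comp]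
  simp

lemma coeff_self_pow (r g : PowerSeries ℚ) (hg : g = PowerSeries.X * comp r g) (n : ℕ) :
    coeff n (g ^ n) = (constantCoeff r) ^ n := by
  rw [hg, mul_pow]
  have := coeff_X_pow_mul ((comp r g) ^ n) n 0
  rw [zero_add] at this
  rw [this, coeff_zero_eq_constantCoeff_apply, map_pow, constCoeff_comp]

lemma key_claim (r g : PowerSeries ℚ)
    (hg0 : constantCoeff g = 0)
    (hg : g = PowerSeries.X * comp r g) :
    ∀ n : ℕ, ∀ k : ℕ, 1 ≤ k → k ≤ n →
      (n : ℚ) * coeff n (g ^ k) = (k : ℚ) * coeff (n - k) (r ^ n) := by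
  intro n
  induction n using Nat.strong_induction_on with
  | _ n IH =>
    intro k hk1 hkn
    rcases eq_or_lt_of_le hkn with rfl | hlt
    · rw [Nat.sub_self, coeff_self_pow r g hg, coeff_zero_eq_constantCoeff_apply, map_pow]
    · -- 1 ≤ k < n, so n ≥ 2
      have hn2 : 2 ≤ n := by omega
      -- coefficient of g^k via the functional equation
      have e : g ^ k = PowerSeries.X * (comp r g * g ^ (k - 1)) := by
        calc g ^ k = PowerSeries.X * comp r g * g ^ (k - 1) := by
              rw [← hg, ← pow_succ', Nat.sub_add_cancel hk1]
          _ = PowerSeries.X * (comp r g * g ^ (k - 1)) := by ring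
      have hc : coeff n (g ^ k)
          = ∑ j ∈ range (n - k + 1), coeff j r * coeff (n - 1) (g ^ (j + (k - 1))) := by
        rw [e, show n = (n - 1) + 1 by omega, coeff_succ_X_mul,
          mul_comp_expand r g hg0 (k - 1) (n - 1)]
        refine (Finset.sum_subset (Finset.range_subset_range.mpr (by omega)) ?_).symm
        intro j hj hj2
        simp only [mem_range, not_lt] at hj hj2
        rw [coeff_pow_zero hg0 (by omega), mul_zero]
      -- per-term use of the induction hypothesis
      have hterm : ∀ j ∈ range (n - k + 1),
          ((n : ℚ) - 1) * coeff (n - 1) (g ^ (j + (k - 1)))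
            = ((k : ℚ) - 1 + j) * coeff (n - k - j) (r ^ (n - 1)) := by
        intro j hj
        simp only [mem_range] at hj
        rcases Nat.eq_zero_or_pos (j + (k - 1)) with h0 | hpos
        · have hj0 : j = 0 := by omega
          have hk1' : k = 1 := by omega
          subst hj0; subst hk1'
          simp [coeff_one, show ¬ (n - 1 = 0) by omega]
        · have h := IH (n - 1) (by omega) (j + (k - 1)) hpos (by omega)
          have hc1 : ((n - 1 : ℕ) : ℚ) = (n : ℚ) - 1 := by
            rw [Nat.cast_sub (by omega)]; norm_num
          have hc2 : ((j + (k - 1) : ℕ) : ℚ) = (k : ℚ) - 1 + j := by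
            rw [Nat.cast_add, Nat.cast_sub hk1]; push_cast; ring
          have hidx : (n - 1) - (j + (k - 1)) = n - k - j := by omega
          rw [hc1, hc2, hidx] at h
          exact h
      set S1 : ℚ := ∑ j ∈ range (n - k + 1), coeff j r * coeff (n - k - j) (r ^ (n - 1))
        with hS1
      set S2 : ℚ := ∑ j ∈ range (n - k + 1),
          (j : ℚ) * coeff j r * coeff (n - k - j) (r ^ (n - 1)) with hS2
      have h1 : ((n : ℚ) - 1) * coeff n (g ^ k) = ((k : ℚ) - 1) * S1 + S2 := by
        rw [hc, Finset.mul_sum, hS1, hS2, Finset.mul_sum, ← Finset.sum_add_distrib]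
        refine Finset.sum_congr rfl fun j hj => ?_
        rw [show ((n:ℚ) - 1) * (coeff j r * coeff (n-1) (g ^ (j + (k-1))))
            = coeff j r * (((n:ℚ) - 1) * coeff (n-1) (g ^ (j + (k-1)))) by ring,
          hterm j hj]
        ring
      have hA : coeff (n - k) (r ^ n) = S1 := by
        have hrn : r ^ n = r * r ^ (n - 1) := by
          rw [← pow_succ']; congr 1; omega
        rw [hrn, coeff_mul, Finset.Nat.sum_antidiagonal_eq_sum_range_succ_mk, hS1]
      have hB : ((n : ℚ) - k) * coeff (n - k) (r ^ n) = (n : ℚ) * S2 := by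
        have hm1 : 1 ≤ n - k := by omega
        have hd : d⁄dX ℚ (r ^ n) = n • (r ^ (n - 1) * d⁄dX ℚ r) := by
          rw [Derivation.leibniz_pow, smul_eq_mul]
        have hcd := congrArg (coeff (n - k - 1)) hd
        rw [coeff_derivative, map_nsmul, nsmul_eq_mul] at hcd
        rw [show n - k - 1 + 1 = n - k by omega] at hcd
        have hcast : ((n - k - 1 : ℕ) : ℚ) + 1 = (n : ℚ) - k := by
          rw [Nat.cast_sub (by omega : 1 ≤ n - k), Nat.cast_sub (by omega : k ≤ n)]
          ring
        rw [hcast] at hcd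
        rw [mul_comm ((n:ℚ) - (k:ℚ)) (coeff (n - k) (r ^ n)), hcd]
        congr 1
        have hR : S2 = ∑ a ∈ range (n - k),
            ((a + 1 : ℕ) : ℚ) * coeff (a + 1) r * coeff (n - k - (a + 1)) (r ^ (n - 1)) := by
          rw [hS2, Finset.sum_range_succ']
          simp
        rw [mul_comm (r ^ (n-1)) _, coeff_mul, Finset.Nat.sum_antidiagonal_eq_sum_range_succ_mk,
          hR]
        refine Finset.sum_congr (by congr 1; omega) fun a ha => ?_
        simp only [mem_range] at ha
        rw [coeff_derivative]
        rw [show n - k - 1 - a = n - k - (a + 1) by omega]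
        push_cast
        ring
      have hne : ((n : ℚ) - 1) ≠ 0 := by
        have : (2 : ℚ) ≤ (n : ℚ) := by exact_mod_cast hn2
        linarith
      refine mul_left_cancel₀ hne ?_
      have goal2 : ((n : ℚ) - 1) * ((n : ℚ) * coeff n (g ^ k))
          = ((n : ℚ) - 1) * ((k : ℚ) * coeff (n - k) (r ^ n)) := by
        linear_combination (n : ℚ) * h1 - (n : ℚ) * ((k : ℚ) - 1) * hA - hB
      exact goal2

/-- Lagrange inversion for tree-like equations: if `g = X · (r ∘ g)` with
`r(0) ≠ 0` and `g(0) = 0`, then `n · [Xⁿ] g = [X^(n-1)] (rⁿ)` for all `n ≥ 1`. -/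
theorem lagrange_inversion (r g : PowerSeries ℚ)
    (hr : PowerSeries.constantCoeff r ≠ 0)
    (hg0 : PowerSeries.constantCoeff g = 0)
    (hg : g = PowerSeries.X * comp r g) :
    ∀ n : ℕ, 1 ≤ n →
      (n : ℚ) * PowerSeries.coeff n g = PowerSeries.coeff (n - 1) (r ^ n) := by
  intro n hn
  have := key_claim r g hg0 hg n 1 le_rfl hn
  rwa [pow_one, Nat.cast_one, one_mul] at this
end

section
/- Catalan numbers from the Catalan tree equation: let c ∈ ℚ⟦X⟧ have zero constant coefficient and satisfy c = X + c². Then for every n ≥ 1, the coefficient of Xⁿ in c equals the (n−1)-st Catalan number, [Xⁿ]c = (1/n)·binomial(2n−2, n−1). -/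
open PowerSeries

lemma catalan_range_succ (n : ℕ) :
    catalan (n + 1) = ∑ i ∈ Finset.range (n + 1), catalan i * catalan (n - i) := by
  rw [catalan_succ, Finset.sum_range fun i => catalan i * catalan (n - i)]

/-- Catalan numbers from the Catalan tree equation: if `c(0) = 0` and `c = X + c²`,
then `[Xⁿ] c = (1/n) · binomial (2n-2) (n-1)` for all `n ≥ 1`. -/
theorem catalan_tree_coeff (c : PowerSeries ℚ)
    (hc0 : PowerSeries.constantCoeff c = 0)
    (hc : c = PowerSeries.X + c ^ 2) :
    ∀ n : ℕ, 1 ≤ n →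
      PowerSeries.coeff n c =
        (1 / (n : ℚ)) * ((2 * n - 2).choose (n - 1) : ℚ) := by
  have hc0' : PowerSeries.coeff 0 c = 0 := by
    rwa [PowerSeries.coeff_zero_eq_constantCoeff]
  have key : ∀ n : ℕ, PowerSeries.coeff (n + 1) c = (catalan n : ℚ) := by
    intro n
    induction n using Nat.strong_induction_on with
    | _ n ih =>
      conv_lhs => rw [hc]
      rw [map_add, PowerSeries.coeff_X, sq, PowerSeries.coeff_mul,
        Finset.Nat.sum_antidiagonal_eq_sum_range_succ_mk]
      cases n with
      | zero => simp [Finset.sum_range_succ, hc0']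
      | succ m =>
        have h0 : (if m + 1 + 1 = 1 then (1:ℚ) else 0) = 0 := by simp
        rw [h0, zero_add, Finset.sum_range_succ', Finset.sum_range_succ]
        simp only [Nat.sub_self, hc0', zero_mul, mul_zero, add_zero]
        have hterm : ∀ k ∈ Finset.range (m + 1),
            PowerSeries.coeff (k + 1) c * PowerSeries.coeff (m + 2 - (k + 1)) c
              = ((catalan k : ℚ) * (catalan (m - k) : ℚ)) := by
          intro k hk
          rw [Finset.mem_range] at hk
          have h1 : m + 2 - (k + 1) = (m - k) + 1 := by omega
          rw [h1, ih k (by omega), ih (m - k) (by omega)]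
        rw [Finset.sum_congr rfl hterm]
        rw [catalan_range_succ m]
        push_cast
        simp
  intro n hn
  obtain ⟨m, rfl⟩ : ∃ m, n = m + 1 := ⟨n - 1, by omega⟩
  rw [key m]
  have hcb : ((m + 1) : ℚ) * (catalan m : ℚ) = ((2 * m).choose m : ℚ) := by
    have := succ_mul_catalan_eq_centralBinom m
    have : ((m + 1) * catalan m : ℕ) = ((2 * m).choose m : ℕ) := by
      rw [this]; rfl
    exact_mod_cast this
  have h1 : 2 * (m + 1) - 2 = 2 * m := by omega
  have h2 : m + 1 - 1 = m := by omega
  rw [h1, h2]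
  have hne : ((m : ℚ) + 1) ≠ 0 := by positivity
  field_simp
  push_cast
  linarith [hcb]
end

section
/- Cayley's formula for rooted labelled trees via the functional equation: let t ∈ ℚ⟦X⟧ have zero constant coefficient and satisfy t = X · (exp∘t), where exp = ∑_{n≥0} Xⁿ/n!. Then for every n ≥ 1, the coefficient of Xⁿ in t equals n^{n−1}/n!. -/
open PowerSeries

section Aux
open Finset fwdDiff


lemma fwdDiff_iter_zero_fun (r : ℕ) : (Δ_[(1:ℚ)])^[r] (fun _ : ℚ => (0:ℚ)) = fun _ => 0 := by
  induction r with
  | zero => rfl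
  | succ r ih => rw [Function.iterate_succ_apply, show (Δ_[(1:ℚ)] fun _ : ℚ => (0:ℚ)) = fun _ => 0 from funext fun _ => sub_self 0, ih]

lemma fwdDiff_iter_zero_of_le {f : ℚ → ℚ} {m m' : ℕ} (h : m ≤ m')
    (hf : (Δ_[(1:ℚ)])^[m] f = 0) : (Δ_[(1:ℚ)])^[m'] f = 0 := by
  obtain ⟨r, rfl⟩ := Nat.exists_eq_add_of_le h
  rw [Nat.add_comm, Function.iterate_add_apply, hf]
  show (Δ_[(1:ℚ)])^[r] (fun _ => 0) = 0
  rw [fwdDiff_iter_zero_fun]; rfl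

lemma fwdDiff_iter_monomial (d : ℕ) : (Δ_[(1:ℚ)])^[d + 1] (fun y : ℚ => y ^ d) = 0 := by
  induction d using Nat.strong_induction_on with
  | _ d IH =>
    match d with
    | 0 =>
      funext y
      simp [fwdDiff]
    | (e + 1) =>
      rw [Function.iterate_succ_apply]
      have h1 : Δ_[(1:ℚ)] (fun y : ℚ => y ^ (e + 1))
          = ∑ j ∈ range (e + 1), ((e+1).choose j : ℚ) • (fun y : ℚ => y ^ j) := by
        funext y
        simp only [fwdDiff, Finset.sum_apply, Pi.smul_apply, smul_eq_mul]
        rw [add_pow]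
        rw [Finset.sum_range_succ]
        simp [mul_comm]
      rw [h1, fwdDiff_iter_finset_sum]
      refine Finset.sum_eq_zero fun j hj => ?_
      rw [fwdDiff_iter_const_smul]
      have hj' : j < e + 1 := Finset.mem_range.mp hj
      rw [fwdDiff_iter_zero_of_le (Nat.succ_le_of_lt hj') (IH j hj'), smul_zero]

lemma alt_sum_choose_pow {p d : ℕ} (h : d < p) :
    ∑ k ∈ range (p + 1), (-1 : ℚ) ^ (p - k) * (p.choose k : ℚ) * ((k : ℚ) + 1) ^ d = 0 := by
  have key : (Δ_[(1:ℚ)])^[p] (fun y : ℚ => (y + 1) ^ d) = 0 := by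
    have h1 : (fun y : ℚ => (y + 1) ^ d)
        = ∑ j ∈ range (d + 1), (d.choose j : ℚ) • (fun y : ℚ => y ^ j) := by
      funext y
      simp only [Finset.sum_apply, Pi.smul_apply, smul_eq_mul]
      rw [add_pow]
      simp [mul_comm]
    rw [h1, fwdDiff_iter_finset_sum]
    refine Finset.sum_eq_zero fun j hj => ?_
    rw [fwdDiff_iter_const_smul]
    have hj' : j < d + 1 := Finset.mem_range.mp hj
    have : j + 1 ≤ p := Nat.succ_le_of_lt (lt_of_lt_of_le hj' h)
    rw [fwdDiff_iter_zero_of_le this (fwdDiff_iter_monomial j), smul_zero]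
  have hshift := fwdDiff_iter_eq_sum_shift (1:ℚ) (fun y : ℚ => (y + 1) ^ d) p 0
  rw [key] at hshift
  have this : ∑ k ∈ range (p + 1), ((-1 : ℤ) ^ (p - k) * (p.choose k : ℤ)) • ((0:ℚ) + (k : ℕ) • (1:ℚ) + 1) ^ d = 0 := by
    rw [← hshift]; rfl
  calc ∑ k ∈ range (p + 1), (-1 : ℚ) ^ (p - k) * (p.choose k : ℚ) * ((k : ℚ) + 1) ^ d
        = ∑ k ∈ range (p + 1), ((-1 : ℤ) ^ (p - k) * (p.choose k : ℤ)) • ((0:ℚ) + (k : ℕ) • (1:ℚ) + 1) ^ d := by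
          refine Finset.sum_congr rfl fun k _ => ?_
          push_cast
          rw [zsmul_eq_mul]
          push_cast
          ring
      _ = 0 := this

lemma choose_swap (m k j : ℕ) :
    m.choose k * (m - k).choose j = m.choose j * (m - j).choose k := by
  by_cases h : k + j ≤ m
  · have h1 : m.choose (k + j) * (k + j).choose k = m.choose k * (m - k).choose j := by
      simpa using Nat.choose_mul (n := m) (Nat.le_add_right k j)
    have h2 : m.choose (k + j) * (k + j).choose j = m.choose j * (m - j).choose k := by
      simpa using Nat.choose_mul (n := m) (k := k + j) (s := j) (Nat.le_add_left j k)
    have h3 : (k + j).choose k = (k + j).choose j := by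
      rw [← Nat.choose_symm (Nat.le_add_right k j), Nat.add_sub_cancel_left]
    rw [← h1, ← h2, h3]
  · push_neg at h
    have hL : m.choose k * (m - k).choose j = 0 := by
      rcases le_or_gt k m with hk | hk
      · rw [Nat.choose_eq_zero_of_lt (show m - k < j by omega), mul_zero]
      · rw [Nat.choose_eq_zero_of_lt hk, zero_mul]
    have hR : m.choose j * (m - j).choose k = 0 := by
      rcases le_or_gt j m with hk | hk
      · rw [Nat.choose_eq_zero_of_lt (show m - j < k by omega), mul_zero]
      · rw [Nat.choose_eq_zero_of_lt hk, zero_mul]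
    rw [hL, hR]

lemma abel0 (m : ℕ) :
    ∑ k ∈ range (m + 1), (m.choose k : ℚ) * ((k : ℚ) + 1) ^ (k - 1) * ((m - k : ℕ) : ℚ) ^ (m - k)
      = ((m : ℚ) + 1) ^ m := by
  have step1 : ∀ k ∈ range (m + 1),
      (m.choose k : ℚ) * ((k : ℚ) + 1) ^ (k - 1) * ((m - k : ℕ) : ℚ) ^ (m - k)
      = ∑ j ∈ range (m + 1), (m.choose k : ℚ) * ((k : ℚ) + 1) ^ (k - 1) *
          (((m - k).choose j : ℚ) * ((m : ℚ) + 1) ^ j * (-((k : ℚ) + 1)) ^ (m - k - j)) := by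
    intro k hk
    have hk' : k ≤ m := Nat.lt_succ_iff.mp (mem_range.mp hk)
    have hbase : ((m - k : ℕ) : ℚ) = ((m : ℚ) + 1) + (-((k : ℚ) + 1)) := by
      push_cast [hk']; ring
    rw [hbase, add_pow ((m:ℚ)+1) (-((k:ℚ)+1)) (m-k), Finset.mul_sum]
    rw [Finset.sum_subset (Finset.range_subset_range.mpr (show m - k + 1 ≤ m + 1 by omega))
      (fun j _ hj => by
        simp only [Finset.mem_range, not_lt] at hj
        rw [Nat.choose_eq_zero_of_lt (show m - k < j by omega)]
        push_cast; ring)]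
    refine Finset.sum_congr rfl fun j hj => ?_
    push_cast; ring
  rw [Finset.sum_congr rfl step1, Finset.sum_comm]
  have step3 : ∀ j ∈ range (m + 1),
      (∑ k ∈ range (m + 1), (m.choose k : ℚ) * ((k : ℚ) + 1) ^ (k - 1) *
          (((m - k).choose j : ℚ) * ((m : ℚ) + 1) ^ j * (-((k : ℚ) + 1)) ^ (m - k - j)))
      = ((m : ℚ) + 1) ^ j * (m.choose j : ℚ) *
          (∑ k ∈ range (m + 1), ((m - j).choose k : ℚ) * ((k : ℚ) + 1) ^ (k - 1) *
            (-((k : ℚ) + 1)) ^ (m - k - j)) := by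
    intro j _
    rw [Finset.mul_sum]
    refine Finset.sum_congr rfl fun k _ => ?_
    have := choose_swap m k j
    have hcast : (m.choose k : ℚ) * ((m - k).choose j : ℚ) = (m.choose j : ℚ) * ((m - j).choose k : ℚ) := by
      exact_mod_cast congrArg (Nat.cast : ℕ → ℚ) this
    calc (m.choose k : ℚ) * ((k : ℚ) + 1) ^ (k - 1) *
          (((m - k).choose j : ℚ) * ((m : ℚ) + 1) ^ j * (-((k : ℚ) + 1)) ^ (m - k - j))
        = (m.choose k : ℚ) * ((m - k).choose j : ℚ) * (((k : ℚ) + 1) ^ (k - 1) *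
            ((m : ℚ) + 1) ^ j * (-((k : ℚ) + 1)) ^ (m - k - j)) := by ring
      _ = (m.choose j : ℚ) * ((m - j).choose k : ℚ) * (((k : ℚ) + 1) ^ (k - 1) *
            ((m : ℚ) + 1) ^ j * (-((k : ℚ) + 1)) ^ (m - k - j)) := by rw [hcast]
      _ = ((m : ℚ) + 1) ^ j * (m.choose j : ℚ) *
            (((m - j).choose k : ℚ) * ((k : ℚ) + 1) ^ (k - 1) * (-((k : ℚ) + 1)) ^ (m - k - j)) := by
          ring
  rw [Finset.sum_congr rfl step3]
  have step4 : ∀ j ∈ range (m + 1), j ≠ m →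
      ((m : ℚ) + 1) ^ j * (m.choose j : ℚ) *
          (∑ k ∈ range (m + 1), ((m - j).choose k : ℚ) * ((k : ℚ) + 1) ^ (k - 1) *
            (-((k : ℚ) + 1)) ^ (m - k - j)) = 0 := by
    intro j hj hjm
    have hjm' : j < m := lt_of_le_of_ne (Nat.lt_succ_iff.mp (mem_range.mp hj)) hjm
    set p := m - j with hp
    have hp1 : 1 ≤ p := by omega
    have hinner : (∑ k ∈ range (m + 1), ((m - j).choose k : ℚ) * ((k : ℚ) + 1) ^ (k - 1) *
            (-((k : ℚ) + 1)) ^ (m - k - j)) = 0 := by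
      rw [← Finset.sum_subset (Finset.range_subset_range.mpr (show p + 1 ≤ m + 1 by omega))
        (fun k _ hk => by
          simp only [Finset.mem_range, not_lt] at hk
          rw [Nat.choose_eq_zero_of_lt (show m - j < k by omega)]
          push_cast; ring)]
      have : ∀ k ∈ range (p + 1),
          ((m - j).choose k : ℚ) * ((k : ℚ) + 1) ^ (k - 1) * (-((k : ℚ) + 1)) ^ (m - k - j)
          = (-1 : ℚ) ^ (p - k) * (p.choose k : ℚ) * ((k : ℚ) + 1) ^ (p - 1) := by
        intro k hk
        have hkp : k ≤ p := Nat.lt_succ_iff.mp (mem_range.mp hk)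
        have hexp : m - k - j = p - k := by omega
        rw [hexp, neg_pow]
        rcases Nat.eq_zero_or_pos k with rfl | hk1
        · simp
        · have : ((k : ℚ) + 1) ^ (k - 1) * ((k : ℚ) + 1) ^ (p - k) = ((k : ℚ) + 1) ^ (p - 1) := by
            rw [← pow_add]
            congr 1
            omega
          calc (p.choose k : ℚ) * ((k : ℚ) + 1) ^ (k - 1) *
                ((-1 : ℚ) ^ (p - k) * ((k : ℚ) + 1) ^ (p - k))
              = (-1 : ℚ) ^ (p - k) * (p.choose k : ℚ) *
                (((k : ℚ) + 1) ^ (k - 1) * ((k : ℚ) + 1) ^ (p - k)) := by ring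
            _ = _ := by rw [this]
      rw [Finset.sum_congr rfl this]
      exact alt_sum_choose_pow (by omega : p - 1 < p)
    rw [hinner, mul_zero]
  rw [Finset.sum_eq_single_of_mem m (self_mem_range_succ m) step4]
  have : ∀ k ∈ range (m + 1),
      ((m - m).choose k : ℚ) * ((k : ℚ) + 1) ^ (k - 1) * (-((k : ℚ) + 1)) ^ (m - k - m)
      = if k = 0 then 1 else 0 := by
    intro k hk
    rcases Nat.eq_zero_or_pos k with rfl | hk1
    · simp
    · rw [Nat.sub_self, Nat.choose_eq_zero_of_lt hk1, if_neg (by omega)]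
      push_cast; ring
  rw [Finset.sum_congr rfl this, Finset.sum_ite_eq' (range (m+1)) 0 (fun _ => (1:ℚ)),
    if_pos (mem_range.mpr (by omega))]
  simp

lemma abel1 (m : ℕ) :
    ∑ k ∈ range (m + 1), (((m + 1).choose (k + 1) : ℕ) : ℚ) * ((k : ℚ) + 1) ^ k *
        ((m - k : ℕ) : ℚ) ^ (m - k) = ((m : ℚ) + 1) ^ (m + 1) := by
  have h := abel0 m
  have h2 := congrArg (fun z => ((m : ℚ) + 1) * z) h
  simp only [Finset.mul_sum] at h2
  calc ∑ k ∈ range (m + 1), (((m + 1).choose (k + 1) : ℕ) : ℚ) * ((k : ℚ) + 1) ^ k *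
        ((m - k : ℕ) : ℚ) ^ (m - k)
      = ∑ k ∈ range (m + 1), ((m : ℚ) + 1) *
          ((m.choose k : ℚ) * ((k : ℚ) + 1) ^ (k - 1) * ((m - k : ℕ) : ℚ) ^ (m - k)) := by
        refine Finset.sum_congr rfl fun k _ => ?_
        have hn : (m + 1) * m.choose k = (m + 1).choose (k + 1) * (k + 1) :=
          Nat.add_one_mul_choose_eq m k
        have hq : ((m : ℚ) + 1) * (m.choose k : ℚ)
            = ((m + 1).choose (k + 1) : ℚ) * ((k : ℚ) + 1) := by
          exact_mod_cast congrArg (Nat.cast : ℕ → ℚ) hn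
        have hpow : ((k : ℚ) + 1) * ((k : ℚ) + 1) ^ (k - 1) = ((k : ℚ) + 1) ^ k := by
          rcases Nat.eq_zero_or_pos k with rfl | hk
          · simp
          · rw [← pow_succ']
            congr 1
            omega
        calc (((m + 1).choose (k + 1) : ℕ) : ℚ) * ((k : ℚ) + 1) ^ k * ((m - k : ℕ) : ℚ) ^ (m - k)
            = ((m + 1).choose (k + 1) : ℚ) * (((k : ℚ) + 1) * ((k : ℚ) + 1) ^ (k - 1)) *
              ((m - k : ℕ) : ℚ) ^ (m - k) := by rw [hpow]
          _ = (((m + 1).choose (k + 1) : ℚ) * ((k : ℚ) + 1)) * ((k : ℚ) + 1) ^ (k - 1) *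
              ((m - k : ℕ) : ℚ) ^ (m - k) := by ring
          _ = _ := by rw [← hq]; ring
    _ = ((m : ℚ) + 1) * ((m : ℚ) + 1) ^ m := h2
    _ = ((m : ℚ) + 1) ^ (m + 1) := by rw [← pow_succ']

lemma abelC (n : ℕ) (hn : 1 ≤ n) :
    ∑ i ∈ Finset.Ico 1 n, (n.choose i : ℚ) * (i : ℚ) ^ (i - 1) * ((n - i : ℕ) : ℚ) ^ (n - i)
      = ((n : ℚ) - 1) * (n : ℚ) ^ (n - 1) := by
  obtain ⟨m, rfl⟩ := Nat.exists_eq_add_of_le hn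
  have h := abel1 m
  have hre : ∑ k ∈ range (m + 1), (((m + 1).choose (k + 1) : ℕ) : ℚ) * ((k : ℚ) + 1) ^ k *
        ((m - k : ℕ) : ℚ) ^ (m - k)
      = ∑ i ∈ Finset.Ico 1 (m + 2), ((m + 1).choose i : ℚ) * (i : ℚ) ^ (i - 1) *
        ((m + 1 - i : ℕ) : ℚ) ^ (m + 1 - i) := by
    rw [Finset.sum_Ico_eq_sum_range]
    refine Finset.sum_congr (by norm_num) fun k hk => ?_
    have h1 : 1 + k = k + 1 := by omega
    have h2 : m + 1 - (1 + k) = m - k := by omega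
    rw [h1, show m + 1 - (k + 1) = m - k from by omega, Nat.add_sub_cancel]
    push_cast
    ring
  have hIco : ∑ i ∈ Finset.Ico 1 (m + 2), ((m + 1).choose i : ℚ) * (i : ℚ) ^ (i - 1) *
        ((m + 1 - i : ℕ) : ℚ) ^ (m + 1 - i) = ((m : ℚ) + 1) ^ (m + 1) := by
    rw [← hre]; exact h
  have hsplit := Finset.sum_Ico_succ_top (show 1 ≤ m + 1 by omega)
    (fun i => ((m + 1).choose i : ℚ) * (i : ℚ) ^ (i - 1) * ((m + 1 - i : ℕ) : ℚ) ^ (m + 1 - i))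
  rw [hIco] at hsplit
  have htop : ((m + 1).choose (m + 1) : ℚ) * ((m + 1 : ℕ) : ℚ) ^ (m + 1 - 1) *
      ((m + 1 - (m + 1) : ℕ) : ℚ) ^ (m + 1 - (m + 1)) = ((m : ℚ) + 1) ^ m := by
    rw [Nat.choose_self, Nat.sub_self, Nat.add_sub_cancel]
    push_cast
    ring
  have key : ∑ i ∈ Finset.Ico 1 (m + 1), ((m + 1).choose i : ℚ) * (i : ℚ) ^ (i - 1) *
      ((m + 1 - i : ℕ) : ℚ) ^ (m + 1 - i) = (m : ℚ) * ((m : ℚ) + 1) ^ m := by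
    have hpow : ((m : ℚ) + 1) ^ (m + 1) = ((m : ℚ) + 1) * ((m : ℚ) + 1) ^ m := by
      rw [pow_succ']
    rw [htop] at hsplit
    linarith [hsplit, hpow]
  rw [show 1 + m = m + 1 from by omega]
  rw [key]
  push_cast
  ring

end Aux

section Aux2
open Finset PowerSeries

section PS

variable (t : PowerSeries ℚ) (ht0 : PowerSeries.constantCoeff t = 0)

/-- truncated exponential sum -/
noncomputable def S (t : PowerSeries ℚ) (N : ℕ) : PowerSeries ℚ :=
  ∑ k ∈ range (N + 1), PowerSeries.C ((k.factorial : ℚ)⁻¹) * t ^ k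

lemma coeff_compE (n : ℕ) : coeff n (comp (exp ℚ) t) =
    ∑ k ∈ range (n + 1), ((k.factorial : ℚ)⁻¹) * coeff n (t ^ k) := by
  simp [comp, coeff_exp, one_div]

include ht0 in
lemma hvan {n k : ℕ} (h : n < k) : coeff n (t ^ k) = 0 := by
  have hdvd : (X : PowerSeries ℚ) ^ k ∣ t ^ k :=
    pow_dvd_pow_of_dvd (PowerSeries.X_dvd_iff.mpr ht0) k
  exact PowerSeries.X_pow_dvd_iff.mp hdvd n h

include ht0 in
lemma coeff_S {n N : ℕ} (h : n ≤ N) : coeff n (comp (exp ℚ) t) = coeff n (S t N) := by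
  rw [coeff_compE, S, map_sum]
  rw [Finset.sum_subset (Finset.range_subset_range.mpr (by omega : n + 1 ≤ N + 1))
    (fun k _ hk => by
      simp only [Finset.mem_range, not_lt] at hk
      rw [hvan t ht0 (by omega : n < k), mul_zero])]
  refine Finset.sum_congr rfl fun k _ => ?_
  rw [coeff_C_mul]

lemma hDS (N : ℕ) : d⁄dX ℚ (S t (N + 1)) = S t N * d⁄dX ℚ t := by
  rw [S, map_sum]
  have hterm : ∀ k : ℕ, d⁄dX ℚ (PowerSeries.C ((k.factorial : ℚ)⁻¹) * t ^ k)
      = PowerSeries.C ((k : ℚ) * (k.factorial : ℚ)⁻¹) * t ^ (k - 1) * d⁄dX ℚ t := by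
    intro k
    rw [Derivation.leibniz, derivative_C, smul_zero, add_zero, Derivation.leibniz_pow,
      smul_eq_mul, nsmul_eq_mul, smul_eq_mul]
    rw [map_mul, ← map_natCast (PowerSeries.C (R := ℚ)) k]
    ring
  rw [Finset.sum_congr rfl fun k _ => hterm k]
  rw [Finset.sum_range_succ']
  simp only [Nat.cast_zero, zero_mul, map_zero, zero_mul, add_zero]
  have hterm2 : ∀ k : ℕ,
      PowerSeries.C (((k + 1 : ℕ) : ℚ) * ((k + 1).factorial : ℚ)⁻¹) * t ^ (k + 1 - 1) * d⁄dX ℚ t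
      = PowerSeries.C ((k.factorial : ℚ)⁻¹) * t ^ k * d⁄dX ℚ t := by
    intro k
    congr 2
    · congr 1
      rw [Nat.factorial_succ]
      push_cast
      rw [mul_inv]
      rw [← mul_assoc, mul_inv_cancel₀ (by positivity : ((k : ℚ) + 1) ≠ 0), one_mul]
  rw [Finset.sum_congr rfl fun k _ => hterm2 k, S, Finset.sum_mul]

variable (ht : t = PowerSeries.X * comp (PowerSeries.exp ℚ) t)

include ht0 in
lemma hDE : d⁄dX ℚ (comp (exp ℚ) t) = comp (exp ℚ) t * d⁄dX ℚ t := by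
  ext n
  rw [coeff_derivative, coeff_S t ht0 (le_refl (n + 1)),
    ← coeff_derivative (S t (n + 1)) n, hDS t n, coeff_mul, coeff_mul]
  refine Finset.sum_congr rfl fun p hp => ?_
  have hp1 : p.1 ≤ n := by
    have := Finset.HasAntidiagonal.mem_antidiagonal.mp hp
    omega
  rw [← coeff_S t ht0 hp1]

include ht0 ht in
lemma hDt : d⁄dX ℚ t = t * d⁄dX ℚ t + comp (exp ℚ) t := by
  conv_lhs => rw [ht]
  rw [Derivation.leibniz, derivative_X, smul_eq_mul, smul_eq_mul, mul_one,
    hDE t ht0, ← mul_assoc, ← ht]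

include ht0 ht in
lemma hrec (m : ℕ) : ((m : ℚ) + 1) * coeff (m + 1) t = coeff (m + 1) t +
    ∑ p ∈ Finset.HasAntidiagonal.antidiagonal m, coeff p.1 t * (coeff (p.2 + 1) t * ((p.2 : ℚ) + 1)) := by
  have h := congrArg (coeff m) (hDt t ht0 ht)
  rw [coeff_derivative, map_add, coeff_mul] at h
  have h2 : coeff m (comp (exp ℚ) t) = coeff (m + 1) t := by
    conv_rhs => rw [ht]
    rw [coeff_succ_X_mul]
  rw [h2] at h
  have h3 : ∀ p ∈ Finset.HasAntidiagonal.antidiagonal m,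
      coeff p.1 t * coeff p.2 (d⁄dX ℚ t)
      = coeff p.1 t * (coeff (p.2 + 1) t * ((p.2 : ℚ) + 1)) := by
    intro p _
    rw [coeff_derivative]
  rw [Finset.sum_congr rfl h3] at h
  linarith [h]

include ht in
lemma base1 : coeff 1 t = 1 := by
  have h : coeff 1 t = coeff 0 (comp (exp ℚ) t) := by
    conv_lhs => rw [ht]
    rw [coeff_succ_X_mul]
  rw [h, coeff_compE]
  simp

end PS

end Aux2

/-- Cayley's formula via the functional equation: if `t(0) = 0` and `t = X · (exp ∘ t)`,
then `[Xⁿ] t = n^(n-1) / n!` for all `n ≥ 1`. -/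
theorem cayley_tree_coeff (t : PowerSeries ℚ)
    (ht0 : PowerSeries.constantCoeff t = 0)
    (ht : t = PowerSeries.X * comp (PowerSeries.exp ℚ) t) :
    ∀ n : ℕ, 1 ≤ n →
      PowerSeries.coeff n t = (n : ℚ) ^ (n - 1) / (n.factorial : ℚ) := by
  intro n
  induction n using Nat.strong_induction_on with
  | _ n IH =>
    intro hn
    rcases n with _ | n'
    · omega
    rcases n' with _ | m
    · rw [base1 t ht]
      norm_num
    -- n = m + 2
    have hr := hrec t ht0 ht (m + 1)
    rw [Finset.Nat.sum_antidiagonal_eq_sum_range_succ_mk, Finset.sum_range_succ'] at hr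
    rw [coeff_zero_eq_constantCoeff_apply, ht0, zero_mul, add_zero] at hr
    have hr' : ((m:ℚ) + 1 + 1) * coeff (m+1+1) t = coeff (m+1+1) t +
        ∑ k ∈ Finset.range (m+1), coeff (k+1) t *
          (coeff ((m+1-(k+1))+1) t * (((m+1-(k+1) : ℕ) : ℚ) + 1)) := by
      push_cast at hr ⊢
      exact hr
    have hfac : ∀ N : ℕ, ((N.factorial : ℚ)) ≠ 0 :=
      fun N => Nat.cast_ne_zero.mpr (Nat.factorial_ne_zero N)
    have hterm : ∀ k ∈ Finset.range (m+1),
        coeff (k+1) t * (coeff ((m+1-(k+1))+1) t * (((m+1-(k+1) : ℕ) : ℚ) + 1))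
        = ((m+1+1).choose (1+k) : ℚ) * (((1+k : ℕ)) : ℚ) ^ (1+k-1) *
          (((m+1+1-(1+k) : ℕ)) : ℚ) ^ (m+1+1-(1+k)) / ((m+1+1).factorial : ℚ) := by
      intro k hk
      have hk' : k ≤ m := by
        simp only [Finset.mem_range] at hk
        omega
      rw [show m+1-(k+1) = m-k from by omega, show (1:ℕ)+k = k+1 from by omega,
        show m+1+1-(k+1) = m-k+1 from by omega, Nat.add_sub_cancel]
      have hIH1 : coeff (k+1) t = ((k+1 : ℕ) : ℚ)^k / ((k+1).factorial : ℚ) := by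
        have := IH (k+1) (by omega) (by omega)
        rwa [Nat.add_sub_cancel] at this
      have hIH2 : coeff (m-k+1) t = ((m-k+1 : ℕ) : ℚ)^(m-k) / ((m-k+1).factorial : ℚ) := by
        have := IH (m-k+1) (by omega) (by omega)
        rwa [Nat.add_sub_cancel] at this
      rw [hIH1, hIH2, Nat.cast_choose ℚ (show k+1 ≤ m+1+1 by omega),
        show m+1+1-(k+1) = m-k+1 from by omega]
      rw [pow_succ]
      have hc : ((m-k+1 : ℕ) : ℚ) = ((m-k : ℕ) : ℚ) + 1 := by push_cast; ring
      rw [hc]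
      field_simp
    rw [Finset.sum_congr rfl hterm, ← Finset.sum_div] at hr'
    have habel := abelC (m+1+1) (by omega)
    rw [Finset.sum_Ico_eq_sum_range, show m+1+1-1 = m+1 from rfl] at habel
    rw [habel] at hr'
    rw [show m+1+1-1 = m+1 from rfl]
    have hm1 : ((m:ℚ)+1) ≠ 0 := by positivity
    apply mul_left_cancel₀ hm1
    push_cast at hr' ⊢
    linear_combination hr'
end
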